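/- (Unbiased off-policy n-sample gradient estimate with leave-one-out baseline) Let μ be a full-support behavior policy, n ≥ 2, and suppose each map θ ↦ π_θ(y|x) is Fréchet differentiable at θ₀. Write π = π_{θ₀}, R(x,y) = R^π_β(x,y), s(x,y) = D_θ[log π_θ(y|x)](θ₀), and for (y₁,…,yₙ) ∈ Yⁿ let R̂₋ᵢ = (1/(n−1))·Σ_{j≠i} R(x,y_j). Then Σ_x ρ(x)·Σ_{(y₁,…,yₙ)∈Yⁿ} (Π_{i=1}^n μ(y_i|x)) · [−(β/n)·Σ_{i=1}^n (R(x,y_i) − R̂₋ᵢ)·s(x,y_i)] equals the Fréchet derivative at θ₀ of θ ↦ L_μ(π_θ). -/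

import Mathlib

/-!
Under the product distribution `∏ᵢ μ(yᵢ|x)` distinct coordinates are independent with marginal
`μ(·|x)`, so each leave-one-out term `(R(yᵢ) - R̂₋ᵢ) s(yᵢ)` has expectation
`∑_y μ(y) δ(y) s(y)`, where `δ = R - E_μ R`. Differentiating `L_μ` gives `∑_y μ(y) δ(y) Dδ(y)`
with `Dδ = -β (s - E_μ s)`; the centering of `s` drops out because `∑_y μ(y) δ(y) = 0`.
-/

open Finset

noncomputable section

/-- The regularized reward `R^π_β(x,y)`. -/
def Rreg {X Y : Type*} (πref r : X → Y → ℝ) (β : ℝ) (π : X → Y → ℝ) (x : X) (y : Y) : ℝ :=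
  r x y - β * Real.log (π x y / πref x y)

/-- Off-policy loss `L_μ(π)`. -/
def Lmu {X Y : Type*} [Fintype X] [Fintype Y] (ρ : X → ℝ) (πref r : X → Y → ℝ) (β : ℝ)
    (μ π : X → Y → ℝ) : ℝ :=
  (1 / 2) * ∑ x, ρ x * ∑ y, μ x y *
    (Rreg πref r β π x y - ∑ y', μ x y' * Rreg πref r β π x y') ^ 2

section ProductSampling

variable {ι Y R M : Type*} [Fintype ι] [DecidableEq ι] [Fintype Y]
  [CommSemiring R] [AddCommMonoid M] [Module R M]

theorem sum_pi_prod_smul_eq_sum_smul_sum_funSplitAt (w : Y → R) (i : ι) (G : (ι → Y) → M) :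
    ∑ ys : ι → Y, (∏ k, w (ys k)) • G ys
      = ∑ a, w a • ∑ rest : {k // k ≠ i} → Y,
          (∏ k, w (rest k)) • G ((Equiv.funSplitAt i Y).symm (a, rest)) := by
  rw [← (Equiv.funSplitAt i Y).symm.sum_comp, Fintype.sum_prod_type]
  refine sum_congr rfl fun a _ => ?_
  rw [smul_sum]
  refine sum_congr rfl fun rest _ => ?_
  rw [Fintype.prod_eq_mul_prod_subtype_ne _ i, mul_smul]
  congr 2
  · simp
  · exact Fintype.prod_congr _ _ fun k => by simp [k.2]

theorem sum_pi_prod_smul_apply (w : Y → R) (hw : ∑ y, w y = 1) (i : ι) (g : Y → M) :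
    ∑ ys : ι → Y, (∏ k, w (ys k)) • g (ys i) = ∑ y, w y • g y := by
  rw [sum_pi_prod_smul_eq_sum_smul_sum_funSplitAt w i]
  simp [← sum_smul, ← Fintype.prod_sum, hw]

theorem sum_pi_prod_smul_apply_smul_apply (w : Y → R) (hw : ∑ y, w y = 1) {i j : ι} (hij : j ≠ i)
    (c : Y → R) (g : Y → M) :
    ∑ ys : ι → Y, (∏ k, w (ys k)) • (c (ys j) • g (ys i))
      = (∑ y, w y * c y) • ∑ y, w y • g y := by
  rw [sum_pi_prod_smul_eq_sum_smul_sum_funSplitAt w i, smul_sum]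
  refine sum_congr rfl fun a _ => ?_
  simp only [ne_eq, Equiv.funSplitAt, Equiv.piSplitAt_symm_apply, hij, ↓reduceDIte, ← smul_assoc,
    smul_eq_mul, ← sum_smul]
  have marginal := sum_pi_prod_smul_apply w hw (⟨j, hij⟩ : {k // k ≠ i}) c
  simp only [smul_eq_mul] at marginal
  rw [marginal, mul_comm]

end ProductSampling

section LeaveOneOut

variable {ι Y M : Type*} [Fintype ι] [DecidableEq ι] [Fintype Y] [AddCommGroup M] [Module ℝ M]

theorem sum_pi_prod_smul_leaveOneOut (w : Y → ℝ) (hw : ∑ y, w y = 1)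
    (hι : 1 < Fintype.card ι) (c : Y → ℝ) (F : Y → M) (i : ι) :
    ∑ ys : ι → Y, (∏ k, w (ys k)) •
        ((c (ys i) - (1 / ((Fintype.card ι : ℝ) - 1)) * ∑ j ∈ univ.erase i, c (ys j)) • F (ys i))
      = ∑ y, (w y * (c y - ∑ b, w b * c b)) • F y := by
  have hcard : (Fintype.card ι : ℝ) - 1 ≠ 0 := by
    rw [sub_ne_zero]; exact_mod_cast hι.ne'
  calc _ = ∑ ys : ι → Y, (∏ k, w (ys k)) • (c (ys i) • F (ys i))
          - (1 / ((Fintype.card ι : ℝ) - 1)) • ∑ j ∈ univ.erase i,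
              ∑ ys : ι → Y, (∏ k, w (ys k)) • (c (ys j) • F (ys i)) := by
        simp only [sub_smul, mul_smul, sum_smul, smul_sub, smul_sum, sum_sub_distrib]
        rw [sum_comm]
        simp only [smul_comm (∏ k, w _) (1 / ((Fintype.card ι : ℝ) - 1))]
    _ = ∑ y, (w y * c y) • F y
          - (1 / ((Fintype.card ι : ℝ) - 1)) • ∑ j ∈ univ.erase i,
              (∑ b, w b * c b) • ∑ y, w y • F y := by
        rw [sum_pi_prod_smul_apply w hw i (fun y => c y • F y), sum_congr rfl fun j hj =>
          sum_pi_prod_smul_apply_smul_apply w hw (ne_of_mem_erase hj) c F]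
        simp only [mul_smul]
    _ = _ := by
        rw [sum_const, card_erase_of_mem (mem_univ i), card_univ, ← Nat.cast_smul_eq_nsmul ℝ,
          Nat.cast_sub hι.le, Nat.cast_one, smul_smul, one_div_mul_cancel hcard, one_smul, smul_sum]
        simp only [mul_sub, sub_smul, sum_sub_distrib, mul_smul, smul_comm (w _)]

theorem sum_pi_prod_smul_sum_leaveOneOut (w : Y → ℝ) (hw : ∑ y, w y = 1)
    (hι : 1 < Fintype.card ι) (c : Y → ℝ) (F : Y → M) :
    ∑ ys : ι → Y, (∏ k, w (ys k)) • ∑ i,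
        ((c (ys i) - (1 / ((Fintype.card ι : ℝ) - 1)) * ∑ j ∈ univ.erase i, c (ys j)) • F (ys i))
      = (Fintype.card ι : ℝ) • ∑ y, (w y * (c y - ∑ b, w b * c b)) • F y := by
  simp only [smul_sum]
  rw [sum_comm, sum_congr rfl fun i _ => sum_pi_prod_smul_leaveOneOut w hw hι c F i, sum_const,
    card_univ, ← Nat.cast_smul_eq_nsmul ℝ, smul_sum]

end LeaveOneOut

section Derivatives

variable {Θ : Type*} [NormedAddCommGroup Θ] [NormedSpace ℝ Θ] {θ₀ : Θ}

theorem hasFDerivAt_sum_mul_sub_sum_mul_sq {Y : Type*} [Fintype Y] (w : Y → ℝ)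
    (hw : ∑ y, w y = 1) {f : Θ → Y → ℝ} {f' : Y → Θ →L[ℝ] ℝ}
    (hf : ∀ y, HasFDerivAt (fun θ => f θ y) (f' y) θ₀) :
    HasFDerivAt (fun θ => ∑ y, w y * (f θ y - ∑ y', w y' * f θ y') ^ 2)
      ((2 : ℝ) • ∑ y, (w y * (f θ₀ y - ∑ y', w y' * f θ₀ y')) • f' y) θ₀ := by
  have hdev : ∀ y, HasFDerivAt (fun θ => f θ y - ∑ y', w y' * f θ y')
      (f' y - ∑ y', w y' • f' y') θ₀ := fun y =>
    (hf y).sub (HasFDerivAt.fun_sum fun y' _ => (hf y').const_mul (w y'))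
  have hcentered : ∑ y, w y * (f θ₀ y - ∑ y', w y' * f θ₀ y') = 0 := by
    simp [mul_sub, sum_sub_distrib, ← sum_mul, hw]
  refine (HasFDerivAt.fun_sum fun y _ => ((hdev y).pow 2).const_mul (w y)).congr_fderiv ?_
  have hcoeff : ∀ y, w y * (2 • (f θ₀ y - ∑ y', w y' * f θ₀ y') ^ (2 - 1))
      = 2 * (w y * (f θ₀ y - ∑ y', w y' * f θ₀ y')) := fun y => by ring
  simp only [smul_smul, hcoeff, smul_sub, sum_sub_distrib, ← sum_smul, ← mul_sum, hcentered,
    mul_zero, zero_smul, sub_zero]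
  rw [smul_sum]
  simp only [smul_smul]

theorem hasFDerivAt_Rreg {X Y : Type*} (πref r : X → Y → ℝ) (β : ℝ) {π : Θ → X → Y → ℝ}
    {x : X} {y : Y} (href : πref x y ≠ 0) (hπ : ∀ θ, π θ x y ≠ 0)
    (hd : DifferentiableAt ℝ (fun θ => π θ x y) θ₀) :
    HasFDerivAt (fun θ => Rreg πref r β (π θ) x y)
      ((-β) • fderiv ℝ (fun θ => Real.log (π θ x y)) θ₀) θ₀ := by
  have hRreg : (fun θ => Rreg πref r β (π θ) x y)
      = fun θ => (r x y + β * Real.log (πref x y)) - β * Real.log (π θ x y) := by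
    funext θ
    rw [Rreg, Real.log_div (hπ θ) href]
    ring
  rw [hRreg, neg_smul]
  exact ((hd.log (hπ θ₀)).hasFDerivAt.const_mul β).const_sub _

end Derivatives

theorem off_policy_n_sample_estimate_unbiased_general
    {X Y : Type*} [Fintype X] [Fintype Y]
    {Θ : Type*} [NormedAddCommGroup Θ] [NormedSpace ℝ Θ]
    (πref : X → Y → ℝ) (href_pos : ∀ x y, 0 < πref x y)
    (r : X → Y → ℝ) (β : ℝ)
    (ρ : X → ℝ)
    (μ : X → Y → ℝ) (hμ_sum : ∀ x, ∑ y, μ x y = 1)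
    (n : ℕ) (hn : 2 ≤ n)
    (π : Θ → X → Y → ℝ) (hpos : ∀ θ x y, 0 < π θ x y)
    (θ₀ : Θ) (hdiff : ∀ x y, DifferentiableAt ℝ (fun θ => π θ x y) θ₀) :
    (∑ x, ∑ ys : Fin n → Y,
      (ρ x * ∏ i, μ x (ys i)) •
        (∑ i : Fin n,
          (-(β / (n : ℝ)) *
            (Rreg πref r β (π θ₀) x (ys i)
              - (1 / ((n : ℝ) - 1)) *
                  ∑ j ∈ Finset.univ.erase i, Rreg πref r β (π θ₀) x (ys j))) •
            fderiv ℝ (fun θ => Real.log (π θ x (ys i))) θ₀))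
      = fderiv ℝ (fun θ => Lmu ρ πref r β μ (π θ)) θ₀ := by
  set R := Rreg πref r β (π θ₀)
  set s := fun x y => fderiv ℝ (fun θ => Real.log (π θ x y)) θ₀
  have hR x y : HasFDerivAt (fun θ => Rreg πref r β (π θ) x y) ((-β) • s x y) θ₀ :=
    hasFDerivAt_Rreg πref r β (href_pos x y).ne' (fun θ => (hpos θ x y).ne') (hdiff x y)
  have hL : HasFDerivAt (fun θ => Lmu ρ πref r β μ (π θ))
      ((1 / 2 : ℝ) • ∑ x, ρ x • (2 : ℝ) •
        ∑ y, (μ x y * (R x y - ∑ y', μ x y' * R x y')) • (-β) • s x y) θ₀ :=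
    (HasFDerivAt.fun_sum fun x _ =>
      (hasFDerivAt_sum_mul_sub_sum_mul_sq (μ x) (hμ_sum x) (hR x)).const_mul (ρ x)).const_mul _
  have hcard : 1 < Fintype.card (Fin n) := by rw [Fintype.card_fin]; omega
  rw [hL.fderiv, smul_sum]
  refine sum_congr rfl fun x _ => ?_
  have unbiased := sum_pi_prod_smul_sum_leaveOneOut (μ x) (hμ_sum x) hcard (R x) (s x)
  rw [Fintype.card_fin] at unbiased
  have hn0 : (n : ℝ) ≠ 0 := by positivity
  calc _ = (ρ x * -(β / n)) • ∑ ys : Fin n → Y, (∏ k, μ x (ys k)) • ∑ i,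
            (R x (ys i) - 1 / ((n : ℝ) - 1) * ∑ j ∈ univ.erase i, R x (ys j)) • s x (ys i) := by
        rw [smul_sum]
        refine sum_congr rfl fun ys _ => ?_
        simp only [mul_smul, ← smul_sum]
        rw [smul_comm (∏ k, μ x (ys k))]
    _ = _ := by
        simp_rw [unbiased, smul_comm _ (-β)]
        rw [← smul_sum]
        simp only [smul_smul]
        congr 1
        field_simp

/-- the off-policy `n`-sample gradient estimate with leave-one-out baseline
is an unbiased estimate of the gradient of the off-policy loss. -/
theorem off_policy_n_sample_estimate_unbiased
    {X Y : Type*} [Fintype X] [Fintype Y] [Nonempty X] [Nonempty Y]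
    {Θ : Type*} [NormedAddCommGroup Θ] [NormedSpace ℝ Θ]
    (πref : X → Y → ℝ) (href_pos : ∀ x y, 0 < πref x y)
    (href_sum : ∀ x, ∑ y, πref x y = 1)
    (r : X → Y → ℝ) (β : ℝ) (hβ : 0 < β)
    (ρ : X → ℝ) (hρ_nonneg : ∀ x, 0 ≤ ρ x) (hρ_sum : ∑ x, ρ x = 1)
    (μ : X → Y → ℝ) (hμ_pos : ∀ x y, 0 < μ x y) (hμ_sum : ∀ x, ∑ y, μ x y = 1)
    (n : ℕ) (hn : 2 ≤ n)
    (π : Θ → X → Y → ℝ) (hpos : ∀ θ x y, 0 < π θ x y) (hsum : ∀ θ x, ∑ y, π θ x y = 1)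
    (θ₀ : Θ) (hdiff : ∀ x y, DifferentiableAt ℝ (fun θ => π θ x y) θ₀) :
    (∑ x, ∑ ys : Fin n → Y,
      (ρ x * ∏ i, μ x (ys i)) •
        (∑ i : Fin n,
          (-(β / (n : ℝ)) *
            (Rreg πref r β (π θ₀) x (ys i)
              - (1 / ((n : ℝ) - 1)) *
                  ∑ j ∈ Finset.univ.erase i, Rreg πref r β (π θ₀) x (ys j))) •
            fderiv ℝ (fun θ => Real.log (π θ x (ys i))) θ₀))
      = fderiv ℝ (fun θ => Lmu ρ πref r β μ (π θ)) θ₀ :=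
  off_policy_n_sample_estimate_unbiased_general πref href_pos r β ρ μ hμ_sum n hn π hpos θ₀ hdiff
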